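/- arXiv:1112.1127 — 4 statements merged into one kernel-verified Lean document; each statement's English description precedes it below -/
import Mathlib

section
/- (Simon's absorption lemma.) Let n ≥ 1, B_ρ(y) ⊂ ℝⁿ a ball, k ∈ ℝ, Γ > 0, and let φ be a [0,∞)-valued function of balls contained in B_ρ(y) (i.e. of pairs (z,σ) with B_σ(z) ⊆ B_ρ(y)) that is subadditive: φ(A) ≤ ∑_{j=1}^N φ(A_j) whenever A, A₁, …, A_N are balls contained in B_ρ(y) with A ⊆ ⋃_{j=1}^N A_j and A ∩ A_j ≠ ∅ for every j. Then there exist ε₀ = ε₀(k,n) > 0 and C = C(k,n) < ∞ such that: if σ^k φ(B_{σ/2}(z)) ≤ ε₀ σ^k φ(B_σ(z)) + Γ holds for every ball with B_{2σ}(z) ⊆ B_ρ(y), then ρ^k φ(B_{ρ/2}(y)) ≤ C Γ. -/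
/-!
Rescaling a fixed finite `1/8`-net of the unit ball covers `B_σ(z)` by `N` balls of radius `σ/8`
centred in `B_σ(z)`, so subadditivity bounds `σ^k φ(B_σ(z))` by `4^k N` times the worst value of
`(σ/4)^k φ(B_{σ/8}(·))` over admissible balls of scale `σ/4`. Inserted into the decay hypothesis
with `ε₀ N max(1, 4^k) ≤ 1/2`, this gives by induction on `m` that
`σ^k φ(B_{σ/2}(z)) ≤ 2Γ + 2^{-m} σ^k φ(B_ρ(y))` for every ball with `B_{2σ}(z) ⊆ B_ρ(y)`, starting
from monotonicity of `φ`. Letting `m → ∞` and covering `B_{ρ/2}(y)` once more gives the bound.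
Iterating at a fixed ball, instead of absorbing into a supremum over all balls, avoids needing
that supremum to be finite, which fails when `k < 0`.
-/

open MeasureTheory Metric Filter Set
open scoped ENNReal Topology NNReal

noncomputable section

/-- Euclidean space `ℝⁿ`. -/
abbrev Euc (n : ℕ) : Type := EuclideanSpace ℝ (Fin n)

/-- Euclidean norm of a finitely-indexed family of reals. -/
def euclNorm {ι : Type} [Fintype ι] (v : ι → ℝ) : ℝ :=
  Real.sqrt (∑ i, v i ^ 2)

/-- The quantity `sup_{x ∈ O, r > 0} r^(-β) ∫_{B_r(x) ∩ O} ρ^p`, i.e. the `p`-th power of the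
Morrey norm `‖·‖_{M^{p,β}(O)}` of a function whose pointwise (Euclidean) magnitude is `ρ`. -/
def morreySup {n : ℕ} (p β : ℝ) (O : Set (Euc n)) (ρ : Euc n → ℝ) : ℝ≥0∞ :=
  ⨆ (x : Euc n) (_ : x ∈ O) (r : ℝ) (_ : 0 < r),
    ENNReal.ofReal (r ^ (-β)) * ∫⁻ y in Metric.ball x r ∩ O, ENNReal.ofReal (ρ y ^ p)

/-- The Morrey norm `‖·‖_{M^{p,β}(O)}` of a function with pointwise magnitude `ρ`. -/
def morreyNorm {n : ℕ} (p β : ℝ) (O : Set (Euc n)) (ρ : Euc n → ℝ) : ℝ≥0∞ :=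
  morreySup p β O ρ ^ (1 / p)

/-- A smooth test function compactly supported inside the open set `O`. -/
def IsTestFun {n : ℕ} (O : Set (Euc n)) (φ : Euc n → ℝ) : Prop :=
  ContDiff ℝ (⊤ : ℕ∞) φ ∧ HasCompactSupport φ ∧ tsupport φ ⊆ O

/-- The `k`-th partial derivative. -/
def pd {n : ℕ} (k : Fin n) (φ : Euc n → ℝ) (x : Euc n) : ℝ :=
  fderiv ℝ φ x (EuclideanSpace.single k 1)

open scoped Pointwise

theorem Real.rpow_mul_div_rpow {c x : ℝ} (hc : 0 < c) (hx : 0 ≤ x) (k : ℝ) :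
    c ^ k * (x / c) ^ k = x ^ k := by
  rw [← Real.mul_rpow hc.le (div_nonneg hx hc.le), mul_div_cancel₀ _ hc.ne']

section SubadditiveOnBalls

variable {X : Type*} [PseudoMetricSpace X]

def SubadditiveOnBalls (φ : X → ℝ → ℝ) (y : X) (ρ : ℝ) : Prop :=
  ∀ (N : ℕ) (z : X) (σ : ℝ) (zs : Fin N → X) (σs : Fin N → ℝ),
    ball z σ ⊆ ball y ρ → (∀ j, ball (zs j) (σs j) ⊆ ball y ρ) →
    ball z σ ⊆ ⋃ j, ball (zs j) (σs j) → (∀ j, (ball z σ ∩ ball (zs j) (σs j)).Nonempty) →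
    φ z σ ≤ ∑ j, φ (zs j) (σs j)

theorem SubadditiveOnBalls.le_of_ball_subset {φ : X → ℝ → ℝ} {y z : X} {ρ σ : ℝ}
    (h : SubadditiveOnBalls φ y ρ) (hσ : 0 < σ) (hz : ball z σ ⊆ ball y ρ) : φ z σ ≤ φ y ρ := by
  simpa using h 1 z σ (fun _ => y) (fun _ => ρ) hz (fun _ => subset_rfl)
    (fun x hx => mem_iUnion.2 ⟨0, hz hx⟩) (fun _ => ⟨z, mem_ball_self hσ, hz (mem_ball_self hσ)⟩)

end SubadditiveOnBalls

section Covering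

variable {E : Type*} [NormedAddCommGroup E] [NormedSpace ℝ E]

omit [NormedSpace ℝ E] in
theorem exists_fin_cover_unitBall [ProperSpace E] {δ : ℝ} (hδ : 0 < δ) :
    ∃ (N : ℕ) (T : Fin N → E), (∀ i, T i ∈ ball 0 1) ∧ ball 0 1 ⊆ ⋃ i, ball (T i) δ := by
  obtain ⟨t, hts, htfin, hcov⟩ := finite_approx_of_totallyBounded
    ((isCompact_closedBall (0 : E) 1).totallyBounded.subset ball_subset_closedBall) δ hδ
  obtain ⟨N, T, -, rfl⟩ := htfin.fin_param
  exact ⟨N, T, fun i => hts (mem_range_self i), by simpa using hcov⟩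

theorem ball_subset_iUnion_ball_add_smul {N : ℕ} {T : Fin N → E} {δ σ : ℝ} (z : E)
    (hT : ball 0 1 ⊆ ⋃ i, ball (T i) δ) (hσ : 0 < σ) :
    ball z σ ⊆ ⋃ i, ball (z + σ • T i) (σ * δ) :=
  calc ball z σ = z +ᵥ σ • ball (0 : E) 1 := by
        rw [_root_.smul_ball hσ.ne', vadd_ball]; simp [abs_of_pos hσ]
    _ ⊆ z +ᵥ σ • ⋃ i, ball (T i) δ := by gcongr
    _ = ⋃ i, ball (z + σ • T i) (σ * δ) := by
        simp [Set.smul_set_iUnion, Set.vadd_set_iUnion, _root_.smul_ball hσ.ne', vadd_ball,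
          abs_of_pos hσ]

theorem ball_add_smul_subset_ball_two_mul {z t : E} {σ r : ℝ} (ht : t ∈ ball 0 1) (hσ : 0 ≤ σ)
    (hr : r ≤ σ) : ball (z + σ • t) r ⊆ ball z (2 * σ) := by
  refine ball_subset_ball' ?_
  have : ‖t‖ < 1 := by simpa using ht
  rw [dist_self_add_left, norm_smul, Real.norm_of_nonneg hσ]
  nlinarith

end Covering

namespace SubadditiveOnBalls

variable {E : Type*} [NormedAddCommGroup E] [NormedSpace ℝ E]
  {φ : E → ℝ → ℝ} {y z : E} {ρ σ : ℝ} {N : ℕ} {T : Fin N → E}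

theorem le_sum_of_cover {δ : ℝ} (h : SubadditiveOnBalls φ y ρ) (hT : ∀ i, T i ∈ ball 0 1)
    (hcov : ball 0 1 ⊆ ⋃ i, ball (T i) δ) (hδ₀ : 0 < δ) (hδ₁ : δ ≤ 1) (hσ : 0 < σ)
    (hz : ball z (2 * σ) ⊆ ball y ρ) : φ z σ ≤ ∑ i, φ (z + σ • T i) (σ * δ) := by
  have hsub : ∀ i, ball (z + σ • T i) (σ * δ) ⊆ ball y ρ := fun i =>
    (ball_add_smul_subset_ball_two_mul (hT i) hσ.le (mul_le_of_le_one_right hσ.le hδ₁)).trans hz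
  refine h N z σ _ _ ((ball_subset_ball (by linarith)).trans hz) hsub
    (ball_subset_iUnion_ball_add_smul z hcov hσ) fun i => ⟨z + σ • T i, ?_, ?_⟩
  · have : ‖T i‖ < 1 := by simpa using hT i
    rw [mem_ball, dist_self_add_left, norm_smul, Real.norm_of_nonneg hσ.le]
    nlinarith
  · exact mem_ball_self (mul_pos hσ hδ₀)

theorem rpow_mul_le_sum (h : SubadditiveOnBalls φ y ρ) (hT : ∀ i, T i ∈ ball 0 1)
    (hcov : ball 0 1 ⊆ ⋃ i, ball (T i) (1 / 8)) (hσ : 0 < σ) (hz : ball z (2 * σ) ⊆ ball y ρ)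
    (k : ℝ) : σ ^ k * φ z σ ≤ 4 ^ k * ∑ i, (σ / 4) ^ k * φ (z + σ • T i) (σ / 4 / 2) := by
  have heighth : σ / 4 / 2 = σ * (1 / 8) := by ring
  rw [← Finset.mul_sum, ← mul_assoc, Real.rpow_mul_div_rpow four_pos hσ.le, heighth]
  gcongr
  exact h.le_sum_of_cover hT hcov (by norm_num) (by norm_num) hσ hz

theorem rpow_mul_half_le_of_decay {k ε Γ : ℝ} (h : SubadditiveOnBalls φ y ρ)
    (hT : ∀ i, T i ∈ ball 0 1) (hcov : ball 0 1 ⊆ ⋃ i, ball (T i) (1 / 8)) (hM : 0 ≤ φ y ρ)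
    (hΓ : 0 ≤ Γ) (hε : 0 ≤ ε) (hε₁ : ε * N ≤ 1 / 2) (hε₂ : ε * N * 4 ^ k ≤ 1 / 2)
    (hdecay : ∀ z σ, 0 < σ → ball z (2 * σ) ⊆ ball y ρ →
      σ ^ k * φ z (σ / 2) ≤ ε * σ ^ k * φ z σ + Γ) (m : ℕ)
    (hσ : 0 < σ) (hz : ball z (2 * σ) ⊆ ball y ρ) :
    σ ^ k * φ z (σ / 2) ≤ 2 * Γ + (1 / 2) ^ m * (σ ^ k * φ y ρ) := by
  induction m generalizing z σ with
  | zero =>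
    have hmono := h.le_of_ball_subset (half_pos hσ) ((ball_subset_ball (by linarith)).trans hz)
    have := mul_le_mul_of_nonneg_left hmono (Real.rpow_nonneg hσ.le k)
    simp only [pow_zero, one_mul]
    linarith
  | succ m ih =>
    have hchild : ∀ i, (σ / 4) ^ k * φ (z + σ • T i) (σ / 4 / 2)
        ≤ 2 * Γ + (1 / 2) ^ m * ((σ / 4) ^ k * φ y ρ) := fun i =>
      ih (by positivity) ((ball_add_smul_subset_ball_two_mul (hT i) hσ.le (by linarith)).trans hz)
    have hsum : σ ^ k * φ z σ ≤ N * (4 ^ k * (2 * Γ) + (1 / 2) ^ m * (σ ^ k * φ y ρ)) :=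
      calc σ ^ k * φ z σ ≤ 4 ^ k * ∑ i, (σ / 4) ^ k * φ (z + σ • T i) (σ / 4 / 2) :=
            h.rpow_mul_le_sum hT hcov hσ hz k
        _ ≤ 4 ^ k * (N * (2 * Γ + (1 / 2) ^ m * ((σ / 4) ^ k * φ y ρ))) := by
            gcongr
            exact (Finset.sum_le_card_nsmul _ _ _ fun i _ => hchild i).trans_eq
              (by rw [Finset.card_univ, Fintype.card_fin, nsmul_eq_mul])
        _ = N * (4 ^ k * (2 * Γ) + (1 / 2) ^ m * (σ ^ k * φ y ρ)) := by
            rw [← Real.rpow_mul_div_rpow four_pos hσ.le k]; ring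
    have htail : 0 ≤ (1 / 2 : ℝ) ^ m * (σ ^ k * φ y ρ) := by positivity
    calc σ ^ k * φ z (σ / 2) ≤ ε * (σ ^ k * φ z σ) + Γ := by
          linarith [hdecay z σ hσ hz]
      _ ≤ ε * (N * (4 ^ k * (2 * Γ) + (1 / 2) ^ m * (σ ^ k * φ y ρ))) + Γ := by gcongr
      _ = ε * N * 4 ^ k * (2 * Γ) + ε * N * ((1 / 2) ^ m * (σ ^ k * φ y ρ)) + Γ := by ring
      _ ≤ 1 / 2 * (2 * Γ) + 1 / 2 * ((1 / 2) ^ m * (σ ^ k * φ y ρ)) + Γ := by gcongr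
      _ = 2 * Γ + (1 / 2) ^ (m + 1) * (σ ^ k * φ y ρ) := by ring

theorem rpow_mul_half_le_two_mul {k ε Γ : ℝ} (h : SubadditiveOnBalls φ y ρ)
    (hT : ∀ i, T i ∈ ball 0 1) (hcov : ball 0 1 ⊆ ⋃ i, ball (T i) (1 / 8)) (hM : 0 ≤ φ y ρ)
    (hΓ : 0 ≤ Γ) (hε : 0 ≤ ε) (hε₁ : ε * N ≤ 1 / 2) (hε₂ : ε * N * 4 ^ k ≤ 1 / 2)
    (hdecay : ∀ z σ, 0 < σ → ball z (2 * σ) ⊆ ball y ρ →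
      σ ^ k * φ z (σ / 2) ≤ ε * σ ^ k * φ z σ + Γ)
    (hσ : 0 < σ) (hz : ball z (2 * σ) ⊆ ball y ρ) : σ ^ k * φ z (σ / 2) ≤ 2 * Γ := by
  have hgeom : Tendsto (fun m : ℕ => (1 / 2 : ℝ) ^ m) atTop (𝓝 0) :=
    tendsto_pow_atTop_nhds_zero_of_lt_one (by norm_num) (by norm_num)
  have hlim : Tendsto (fun m : ℕ => 2 * Γ + (1 / 2) ^ m * (σ ^ k * φ y ρ)) atTop (𝓝 (2 * Γ)) := by
    simpa using tendsto_const_nhds.add (hgeom.mul_const (σ ^ k * φ y ρ))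
  exact ge_of_tendsto' hlim fun m =>
    h.rpow_mul_half_le_of_decay hT hcov hM hΓ hε hε₁ hε₂ hdecay m hσ hz

theorem rpow_mul_le_of_decay {k ε Γ : ℝ} (h : SubadditiveOnBalls φ y ρ)
    (hT : ∀ i, T i ∈ ball 0 1) (hcov : ball 0 1 ⊆ ⋃ i, ball (T i) (1 / 8)) (hM : 0 ≤ φ y ρ)
    (hΓ : 0 ≤ Γ) (hε : 0 ≤ ε) (hε₁ : ε * N ≤ 1 / 2) (hε₂ : ε * N * 4 ^ k ≤ 1 / 2)
    (hdecay : ∀ z σ, 0 < σ → ball z (2 * σ) ⊆ ball y ρ →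
      σ ^ k * φ z (σ / 2) ≤ ε * σ ^ k * φ z σ + Γ)
    (hσ : 0 < σ) (hz : ball z (2 * σ) ⊆ ball y ρ) : σ ^ k * φ z σ ≤ 4 ^ k * (N * (2 * Γ)) := by
  have hchild : ∀ i, (σ / 4) ^ k * φ (z + σ • T i) (σ / 4 / 2) ≤ 2 * Γ := fun i =>
    h.rpow_mul_half_le_two_mul hT hcov hM hΓ hε hε₁ hε₂ hdecay (by positivity)
      ((ball_add_smul_subset_ball_two_mul (hT i) hσ.le (by linarith)).trans hz)
  calc σ ^ k * φ z σ ≤ 4 ^ k * ∑ i, (σ / 4) ^ k * φ (z + σ • T i) (σ / 4 / 2) :=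
        h.rpow_mul_le_sum hT hcov hσ hz k
    _ ≤ 4 ^ k * (N * (2 * Γ)) := by
        gcongr
        exact (Finset.sum_le_card_nsmul _ _ _ fun i _ => hchild i).trans_eq
          (by rw [Finset.card_univ, Fintype.card_fin, nsmul_eq_mul])

end SubadditiveOnBalls

theorem simon_absorption_general (n : ℕ) (k : ℝ) :
    ∃ ε₀ : ℝ, 0 < ε₀ ∧ ∃ C : ℝ, 0 < C ∧
      ∀ (y : Euc n) (ρ : ℝ), 0 < ρ →
        ∀ (φ : Euc n → ℝ → ℝ) (Γ : ℝ), 0 < Γ →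
          -- φ is [0,∞)-valued
          (∀ z σ, 0 ≤ φ z σ) →
          -- φ is subadditive on balls contained in B_ρ(y)
          (∀ (N : ℕ) (z : Euc n) (σ : ℝ) (zs : Fin N → Euc n) (σs : Fin N → ℝ),
            Metric.ball z σ ⊆ Metric.ball y ρ →
            (∀ j, Metric.ball (zs j) (σs j) ⊆ Metric.ball y ρ) →
            Metric.ball z σ ⊆ ⋃ j, Metric.ball (zs j) (σs j) →
            (∀ j, (Metric.ball z σ ∩ Metric.ball (zs j) (σs j)).Nonempty) →
            φ z σ ≤ ∑ j, φ (zs j) (σs j)) →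
          -- hypothesis: decay with absorption constant ε₀
          (∀ (z : Euc n) (σ : ℝ), 0 < σ → Metric.ball z (2 * σ) ⊆ Metric.ball y ρ →
            σ ^ k * φ z (σ / 2) ≤ ε₀ * σ ^ k * φ z σ + Γ) →
          ρ ^ k * φ y (ρ / 2) ≤ C * Γ := by
  obtain ⟨N, T, hT, hcov⟩ :=
    exists_fin_cover_unitBall (E := Euc n) (by norm_num : (0 : ℝ) < 1 / 8)
  set ε := (2 * (N + 1) * (1 + (4 : ℝ) ^ k))⁻¹ with hε
  have hεN : ε * N * (1 + 4 ^ k) ≤ 1 / 2 := by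
    have : ε * N * (1 + 4 ^ k) = N / (2 * (N + 1)) := by rw [hε]; field_simp
    rw [this, div_le_iff₀ (by positivity)]
    linarith
  have h4 : (0 : ℝ) ≤ 4 ^ k := Real.rpow_nonneg (by norm_num) k
  have hε₁ : ε * N ≤ 1 / 2 := by nlinarith
  have hε₂ : ε * N * 4 ^ k ≤ 1 / 2 := by nlinarith
  refine ⟨ε, by positivity, 2 * 8 ^ k * (N + 1), by positivity, ?_⟩
  intro y ρ hρ φ Γ hΓ hφ hsub hdecay
  have hsub : SubadditiveOnBalls φ y ρ := hsub
  have hy : ball y (2 * (ρ / 2)) ⊆ ball y ρ := by rw [mul_div_cancel₀ _ two_ne_zero]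
  have key := hsub.rpow_mul_le_of_decay hT hcov (hφ y ρ) hΓ.le (by positivity) hε₁ hε₂ hdecay
    (half_pos hρ) hy
  have h8 : (8 : ℝ) ^ k = 2 ^ k * 4 ^ k := by
    rw [← Real.mul_rpow (by norm_num) (by norm_num)]; norm_num
  calc ρ ^ k * φ y (ρ / 2) = 2 ^ k * ((ρ / 2) ^ k * φ y (ρ / 2)) := by
        rw [← mul_assoc, Real.rpow_mul_div_rpow two_pos hρ.le]
    _ ≤ 2 ^ k * (4 ^ k * (N * (2 * Γ))) := by gcongr
    _ = 2 * 8 ^ k * N * Γ := by rw [h8]; ring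
    _ ≤ 2 * 8 ^ k * (N + 1) * Γ := by gcongr; linarith

/-- **Simon's absorption lemma** (Lemma C.1): if `φ` is a nonnegative subadditive function
of balls in `B_ρ(y)` and `σ^k φ(B_{σ/2}(z)) ≤ ε₀ σ^k φ(B_σ(z)) + Γ` whenever
`B_{2σ}(z) ⊆ B_ρ(y)`, then `ρ^k φ(B_{ρ/2}(y)) ≤ C Γ`, where `ε₀ = ε₀(k,n) > 0` and
`C = C(k,n)`. A ball is encoded by its centre and radius. -/
theorem simon_absorption (n : ℕ) (hn : 1 ≤ n) (k : ℝ) :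
    ∃ ε₀ : ℝ, 0 < ε₀ ∧ ∃ C : ℝ, 0 < C ∧
      ∀ (y : Euc n) (ρ : ℝ), 0 < ρ →
        ∀ (φ : Euc n → ℝ → ℝ) (Γ : ℝ), 0 < Γ →
          -- φ is [0,∞)-valued
          (∀ z σ, 0 ≤ φ z σ) →
          -- φ is subadditive on balls contained in B_ρ(y)
          (∀ (N : ℕ) (z : Euc n) (σ : ℝ) (zs : Fin N → Euc n) (σs : Fin N → ℝ),
            Metric.ball z σ ⊆ Metric.ball y ρ →
            (∀ j, Metric.ball (zs j) (σs j) ⊆ Metric.ball y ρ) →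
            Metric.ball z σ ⊆ ⋃ j, Metric.ball (zs j) (σs j) →
            (∀ j, (Metric.ball z σ ∩ Metric.ball (zs j) (σs j)).Nonempty) →
            φ z σ ≤ ∑ j, φ (zs j) (σs j)) →
          -- hypothesis: decay with absorption constant ε₀
          (∀ (z : Euc n) (σ : ℝ), 0 < σ → Metric.ball z (2 * σ) ⊆ Metric.ball y ρ →
            σ ^ k * φ z (σ / 2) ≤ ε₀ * σ ^ k * φ z σ + Γ) →
          ρ ^ k * φ y (ρ / 2) ≤ C * Γ :=
  simon_absorption_general n k

end
end

section
/- (Multiplication of local Hardy functions by Hölder functions.) Let n ≥ 1 and 0 < γ ≤ 1. There exists C = C(γ,n,ϑ) such that for every h ∈ L¹(ℝⁿ) with ‖h‖_{h¹(ℝⁿ)} < ∞ and every bounded γ-Hölder continuous g : ℝⁿ → ℝ, the product gh satisfies ‖gh‖_{h¹(ℝⁿ)} ≤ C ‖g‖_{C^{0,γ}(ℝⁿ)} ‖h‖_{h¹(ℝⁿ)}, where ‖g‖_{C^{0,γ}} := sup |g| + sup_{x≠y} |g(x)−g(y)|/|x−y|^γ. -/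
open MeasureTheory Metric Filter Set
open scoped ENNReal Topology NNReal

noncomputable section

/-- The (global) maximal function `g_*(x) = sup_{t>0} |(ϑ_t * g)(x)|`, where
`ϑ_t(x) = t^{-n} ϑ(x/t)`, valued in `ℝ≥0∞`. -/
def maxFun {n : ℕ} (ϑ g : Euc n → ℝ) (x : Euc n) : ℝ≥0∞ :=
  ⨆ (t : ℝ) (_ : 0 < t),
    ENNReal.ofReal |∫ y, t ^ (-(n : ℝ)) * ϑ (t⁻¹ • (x - y)) * g y|

/-- The local maximal function `g_{~*}(x) = sup_{0<t<1} |(ϑ_t * g)(x)|`. -/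
def maxFunLoc {n : ℕ} (ϑ g : Euc n → ℝ) (x : Euc n) : ℝ≥0∞ :=
  ⨆ (t : ℝ) (_ : 0 < t) (_ : t < 1),
    ENNReal.ofReal |∫ y, t ^ (-(n : ℝ)) * ϑ (t⁻¹ • (x - y)) * g y|

/-- The Hardy space norm `‖g‖_{H¹} = ‖g_*‖_{L¹}`. -/
def hardyNorm {n : ℕ} (ϑ g : Euc n → ℝ) : ℝ≥0∞ := ∫⁻ x, maxFun ϑ g x

/-- The local Hardy space norm `‖g‖_{h¹} = ‖g_{~*}‖_{L¹}`. -/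
def hardyNormLoc {n : ℕ} (ϑ g : Euc n → ℝ) : ℝ≥0∞ := ∫⁻ x, maxFunLoc ϑ g x

/-- `ϑ` is an admissible test function for Hardy-space maximal functions: smooth, supported in
the unit ball, with `‖∇ϑ‖_{L^∞} ≤ 1` and `∫ ϑ = 1`. -/
def IsHardyTest {n : ℕ} (ϑ : Euc n → ℝ) : Prop :=
  IsTestFun (Metric.ball (0 : Euc n) 1) ϑ ∧ (∀ x, ‖fderiv ℝ ϑ x‖ ≤ 1) ∧ (∫ x, ϑ x) = 1

/-!
Write `(ϑ_t * gh)(x) = g(x) (ϑ_t * h)(x) + ∫ ϑ_t(x - y) (g(y) - g(x)) h(y) dy`. The first term is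
at most `sup |g| · h_{~*}(x)`. Since `ϑ_t(x - ·)` is supported in `B(x,t)` and bounded by
`‖ϑ‖_∞ t^{-n}`, the second is at most `‖ϑ‖_∞ [g]_γ t^{γ-n} ∫_{B(x,t)} |h|`. Comparing `t ∈ (0,1)`
with the dyadic radius `2^{-k-1} < t ≤ 2^{-k}` bounds its supremum over `t` by
`2^n ∑_k 2^{k(n-γ)} ∫_{B(x,2^{-k})} |h|`, and integrating in `x` (Tonelli) turns the `k`-th term
into `2^{-kγ} |B_1| ‖h‖_{L¹}`: a geometric series, because `γ > 0`. Finally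
`‖h‖_{L¹} ≤ ‖h‖_{h¹}`, because `ϑ_t * h → h` almost everywhere by Lebesgue differentiation.
-/

def scaledKernel {n : ℕ} (ϑ : Euc n → ℝ) (t : ℝ) (z : Euc n) : ℝ :=
  t ^ (-(n : ℝ)) * ϑ (t⁻¹ • z)

section ScaledKernel

variable {n : ℕ} {ϑ : Euc n → ℝ} {t Θ : ℝ}

lemma abs_scaledKernel_le (hΘ : ∀ z, |ϑ z| ≤ Θ) (ht : 0 < t) (z : Euc n) :
    |scaledKernel ϑ t z| ≤ t ^ (-(n : ℝ)) * Θ := by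
  rw [scaledKernel, abs_mul, abs_of_nonneg (Real.rpow_nonneg ht.le _)]
  exact mul_le_mul_of_nonneg_left (hΘ _) (Real.rpow_nonneg ht.le _)

lemma ofReal_abs_integral_le_maxFunLoc (ht0 : 0 < t) (ht1 : t < 1) (g : Euc n → ℝ)
    (x : Euc n) :
    ENNReal.ofReal |∫ y, scaledKernel ϑ t (x - y) * g y| ≤ maxFunLoc ϑ g x :=
  le_iSup₂_of_le t ht0 (le_iSup_of_le ht1 le_rfl)

end ScaledKernel

lemma continuous_of_abs_sub_le_mul_dist_rpow {X : Type*} [PseudoMetricSpace X] {g : X → ℝ}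
    {H γ : ℝ} (hγ : 0 < γ) (hg : ∀ x y, |g x - g y| ≤ H * dist x y ^ γ) :
    Continuous g := by
  refine continuous_iff_continuousAt.2 fun x => tendsto_iff_dist_tendsto_zero.2 ?_
  have hlim : Tendsto (fun y => H * dist y x ^ γ) (𝓝 x) (𝓝 (H * dist x x ^ γ)) :=
    ((continuous_id.dist continuous_const).rpow_const fun _ => Or.inr hγ.le).tendsto x
      |>.const_mul H
  rw [dist_self, Real.zero_rpow hγ.ne', mul_zero] at hlim
  exact squeeze_zero (fun _ => dist_nonneg) (fun y => hg y x) hlim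

lemma nonneg_of_abs_sub_le_mul_dist_rpow {X : Type*} [MetricSpace X] [Nontrivial X]
    {g : X → ℝ} {H γ : ℝ} (hg : ∀ x y, |g x - g y| ≤ H * dist x y ^ γ) : 0 ≤ H := by
  obtain ⟨x, y, hxy⟩ := exists_pair_ne X
  exact nonneg_of_mul_nonneg_left ((abs_nonneg _).trans (hg x y))
    (Real.rpow_pos_of_pos (dist_pos.2 hxy) γ)

namespace IsHardyTest

variable {n : ℕ} {ϑ : Euc n → ℝ} {t Θ : ℝ}

lemma exists_abs_le (hϑ : IsHardyTest ϑ) : ∃ Θ, 0 ≤ Θ ∧ ∀ z, |ϑ z| ≤ Θ := by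
  obtain ⟨Θ, hΘ⟩ := hϑ.1.1.continuous.bounded_above_of_compact_support hϑ.1.2.1
  exact ⟨Θ, (norm_nonneg _).trans (hΘ 0), hΘ⟩

lemma eq_zero_of_one_le_norm (hϑ : IsHardyTest ϑ) {z : Euc n} (hz : 1 ≤ ‖z‖) : ϑ z = 0 :=
  image_eq_zero_of_notMem_tsupport fun hmem => (mem_ball_zero_iff.1 (hϑ.1.2.2 hmem)).not_ge hz

lemma support_scaledKernel_sub_subset (hϑ : IsHardyTest ϑ) (ht : 0 < t) (x : Euc n) :
    Function.support (fun y => scaledKernel ϑ t (x - y)) ⊆ ball x t := by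
  intro y hy
  by_contra hyx
  refine hy (mul_eq_zero_of_right _ (hϑ.eq_zero_of_one_le_norm ?_))
  rw [mem_ball, not_lt, dist_eq_norm'] at hyx
  rwa [norm_smul, norm_inv, Real.norm_of_nonneg ht.le, le_inv_mul_iff₀ ht, mul_one]

lemma integral_scaledKernel_sub (hϑ : IsHardyTest ϑ) (ht : 0 < t) (x : Euc n) :
    ∫ y, scaledKernel ϑ t (x - y) = 1 := by
  rw [integral_sub_left_eq_self (scaledKernel ϑ t)]
  simp only [scaledKernel]
  rw [integral_const_mul, Measure.integral_comp_inv_smul_of_nonneg volume ϑ ht.le, hϑ.2.2,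
    finrank_euclideanSpace_fin, smul_eq_mul, mul_one, ← Real.rpow_natCast,
    ← Real.rpow_add ht, neg_add_cancel, Real.rpow_zero]

lemma continuous_scaledKernel (hϑ : IsHardyTest ϑ) (t : ℝ) : Continuous (scaledKernel ϑ t) :=
  continuous_const.mul (hϑ.1.1.continuous.comp (continuous_const_smul _))

lemma integrable_scaledKernel_sub_mul (hϑ : IsHardyTest ϑ) (hΘ : ∀ z, |ϑ z| ≤ Θ) (ht : 0 < t)
    (x : Euc n) {F : Euc n → ℝ} (hF : Integrable F) :
    Integrable (fun y => scaledKernel ϑ t (x - y) * F y) :=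
  hF.bdd_mul ((hϑ.continuous_scaledKernel t).comp (continuous_sub_left x)).aestronglyMeasurable
    (Eventually.of_forall fun y => abs_scaledKernel_le hΘ ht (x - y))

lemma ae_tendsto_integral_scaledKernel_sub_mul (hϑ : IsHardyTest ϑ) {h : Euc n → ℝ}
    (hh : LocallyIntegrable h) :
    ∀ᵐ x, Tendsto (fun t => ∫ y, scaledKernel ϑ t (x - y) * h y) (𝓝[>] 0) (𝓝 (h x)) := by
  obtain ⟨Θ, -, hΘ⟩ := hϑ.exists_abs_le
  filter_upwards [(Besicovitch.vitaliFamily volume).ae_tendsto_average_norm_sub hh] with x hx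
  refine tendsto_integral_smul_of_tendsto_average_norm_sub (a := closedBall x)
    (Θ * volume.real (ball (0 : Euc n) 1)) (hx.comp (Besicovitch.tendsto_filterAt volume x))
    (Eventually.of_forall fun t => hh.integrableOn_isCompact (isCompact_closedBall x t))
    (tendsto_const_nhds.congr' ?_) ?_ ?_
  · filter_upwards [self_mem_nhdsWithin] with t ht
    exact (hϑ.integral_scaledKernel_sub ht x).symm
  · filter_upwards [self_mem_nhdsWithin] with t ht
    exact (hϑ.support_scaledKernel_sub_subset ht x).trans ball_subset_closedBall
  · -- `|ϑ_t| ≤ Θ t^{-n} = Θ |B(0,1)| / |B̄(x,t)|`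
    filter_upwards [self_mem_nhdsWithin] with t (ht : 0 < t) y
    have hV : 0 < volume.real (ball (0 : Euc n) 1) :=
      ENNReal.toReal_pos (measure_ball_pos _ _ one_pos).ne' measure_ball_lt_top.ne
    rw [Measure.addHaar_real_closedBall _ _ ht.le, finrank_euclideanSpace_fin,
      mul_div_mul_right _ _ hV.ne', div_eq_mul_inv, mul_comm, ← Real.rpow_natCast,
      ← Real.rpow_neg ht.le]
    exact abs_scaledKernel_le hΘ ht _

lemma ae_enorm_le_maxFunLoc (hϑ : IsHardyTest ϑ) {h : Euc n → ℝ} (hh : LocallyIntegrable h) :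
    ∀ᵐ x, ‖h x‖ₑ ≤ maxFunLoc ϑ h x := by
  filter_upwards [hϑ.ae_tendsto_integral_scaledKernel_sub_mul hh] with x hx
  rw [Real.enorm_eq_ofReal_abs]
  refine le_of_tendsto ((ENNReal.continuous_ofReal.comp continuous_abs).tendsto _ |>.comp hx) ?_
  filter_upwards [Ioo_mem_nhdsGT one_pos] with t ht
  exact ofReal_abs_integral_le_maxFunLoc ht.1 ht.2 h x

lemma lintegral_enorm_le_hardyNormLoc (hϑ : IsHardyTest ϑ) {h : Euc n → ℝ}
    (hh : LocallyIntegrable h) : ∫⁻ x, ‖h x‖ₑ ≤ hardyNormLoc ϑ h :=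
  lintegral_mono_ae (hϑ.ae_enorm_le_maxFunLoc hh)

end IsHardyTest

section BallIntegrals

variable {E : Type*} [NormedAddCommGroup E] [MeasurableSpace E] [BorelSpace E]
  {μ : Measure E} {f : E → ℝ≥0∞}

lemma setLIntegral_ball_eq_lintegral_indicator_mk (hf : AEMeasurable f μ) (x : E) (r : ℝ) :
    ∫⁻ y in ball x r, f y ∂μ =
      ∫⁻ y, {p : E × E | dist p.2 p.1 < r}.indicator (fun p => hf.mk f p.2) (x, y) ∂μ :=
  (lintegral_congr_ae (ae_restrict_of_ae hf.ae_eq_mk)).trans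
    (lintegral_indicator measurableSet_ball _).symm

lemma measurable_indicator_dist_lt [SecondCountableTopology E] (hf : Measurable f) (r : ℝ) :
    Measurable ({p : E × E | dist p.2 p.1 < r}.indicator fun p => f p.2) :=
  (hf.comp measurable_snd).indicator
    (measurableSet_lt (measurable_snd.dist measurable_fst) measurable_const)

lemma measurable_setLIntegral_ball [SecondCountableTopology E] [SFinite μ]
    (hf : AEMeasurable f μ) (r : ℝ) : Measurable fun x => ∫⁻ y in ball x r, f y ∂μ := by
  simp_rw [setLIntegral_ball_eq_lintegral_indicator_mk hf]
  exact (measurable_indicator_dist_lt hf.measurable_mk r).lintegral_prod_right'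

lemma lintegral_setLIntegral_ball [SecondCountableTopology E] [SFinite μ] [μ.IsAddHaarMeasure]
    (hf : AEMeasurable f μ) (r : ℝ) :
    ∫⁻ x, ∫⁻ y in ball x r, f y ∂μ ∂μ = μ (ball 0 r) * ∫⁻ y, f y ∂μ := by
  have hinner (y : E) :
      ∫⁻ x, {p : E × E | dist p.2 p.1 < r}.indicator (fun p => hf.mk f p.2) (x, y) ∂μ =
        hf.mk f y * μ (ball 0 r) := by
    rw [← Measure.addHaar_ball_center μ y, ← setLIntegral_const,
      ← lintegral_indicator measurableSet_ball]
    congr 1 with x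
    simp [indicator, dist_comm]
  simp_rw [setLIntegral_ball_eq_lintegral_indicator_mk hf]
  rw [lintegral_lintegral_swap, lintegral_congr hinner,
    lintegral_mul_const'' _ hf.measurable_mk.aemeasurable, lintegral_congr_ae hf.ae_eq_mk.symm,
    mul_comm]
  exact (measurable_indicator_dist_lt hf.measurable_mk r).aemeasurable

end BallIntegrals

def dyadicBallSum {n : ℕ} (γ : ℝ) (f : Euc n → ℝ≥0∞) (x : Euc n) : ℝ≥0∞ :=
  ∑' k : ℕ, ENNReal.ofReal (((2 : ℝ)⁻¹ ^ k) ^ γ * ((2 : ℝ)⁻¹ ^ k) ^ (-(n : ℝ))) *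
    ∫⁻ y in ball x ((2 : ℝ)⁻¹ ^ k), f y

section DyadicBallSum

variable {n : ℕ} {γ : ℝ} {f : Euc n → ℝ≥0∞}

lemma rpow_mul_setLIntegral_ball_le_dyadicBallSum (hγ : 0 ≤ γ) {t : ℝ} (ht0 : 0 < t)
    (ht1 : t ≤ 1) (x : Euc n) :
    ENNReal.ofReal (t ^ γ * t ^ (-(n : ℝ))) * ∫⁻ y in ball x t, f y ≤
      ENNReal.ofReal (2 ^ n) * dyadicBallSum γ f x := by
  obtain ⟨k, hk1, hk2⟩ :=
    exists_nat_pow_near_of_lt_one ht0 ht1 (by norm_num : (0 : ℝ) < 2⁻¹) (by norm_num)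
  set r : ℝ := 2⁻¹ ^ k
  have hr : 0 < r := by positivity
  have hγr : t ^ γ ≤ r ^ γ := Real.rpow_le_rpow ht0.le hk2 hγ
  have hnr : t ^ (-(n : ℝ)) ≤ 2 ^ n * r ^ (-(n : ℝ)) := by
    calc t ^ (-(n : ℝ)) ≤ (2⁻¹ * r) ^ (-(n : ℝ)) :=
          Real.rpow_le_rpow_of_nonpos (by positivity) (by rw [← pow_succ']; exact hk1.le)
            (by simp)
      _ = 2 ^ n * r ^ (-(n : ℝ)) := by
          rw [Real.mul_rpow (by norm_num) hr.le, Real.inv_rpow zero_le_two,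
            Real.rpow_neg zero_le_two, inv_inv, Real.rpow_natCast]
  calc ENNReal.ofReal (t ^ γ * t ^ (-(n : ℝ))) * ∫⁻ y in ball x t, f y
      ≤ ENNReal.ofReal (2 ^ n * (r ^ γ * r ^ (-(n : ℝ)))) * ∫⁻ y in ball x r, f y := by
        gcongr ENNReal.ofReal ?_ * ?_
        · calc t ^ γ * t ^ (-(n : ℝ)) ≤ r ^ γ * (2 ^ n * r ^ (-(n : ℝ))) := by gcongr
            _ = _ := by ring
        · exact lintegral_mono_set (ball_subset_ball hk2)
    _ = ENNReal.ofReal (2 ^ n) * (ENNReal.ofReal (r ^ γ * r ^ (-(n : ℝ))) *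
          ∫⁻ y in ball x r, f y) := by
        rw [ENNReal.ofReal_mul (by positivity), mul_assoc]
    _ ≤ ENNReal.ofReal (2 ^ n) * dyadicBallSum γ f x :=
        mul_le_mul_right (ENNReal.le_tsum k) _

lemma measurable_dyadicBallSum (γ : ℝ) (hf : AEMeasurable f) :
    Measurable (dyadicBallSum γ f) :=
  .tsum fun _ => (measurable_setLIntegral_ball hf _).const_mul _

lemma lintegral_dyadicBallSum (hγ : 0 < γ) (hf : AEMeasurable f) :
    ∫⁻ x, dyadicBallSum γ f x =
      ENNReal.ofReal ((1 - 2⁻¹ ^ γ)⁻¹ * volume.real (ball (0 : Euc n) 1)) * ∫⁻ y, f y := by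
  have hq0 : (0 : ℝ) ≤ 2⁻¹ ^ γ := by positivity
  have hq1 : (2⁻¹ : ℝ) ^ γ < 1 := Real.rpow_lt_one (by norm_num) (by norm_num) hγ
  have hterm (k : ℕ) :
      ∫⁻ x, ENNReal.ofReal (((2 : ℝ)⁻¹ ^ k) ^ γ * ((2 : ℝ)⁻¹ ^ k) ^ (-(n : ℝ))) *
        ∫⁻ y in ball x ((2 : ℝ)⁻¹ ^ k), f y =
      ENNReal.ofReal ((2⁻¹ ^ γ) ^ k) * (volume (ball (0 : Euc n) 1) * ∫⁻ y, f y) := by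
    have hr : (0 : ℝ) < 2⁻¹ ^ k := by positivity
    rw [lintegral_const_mul _ (measurable_setLIntegral_ball hf _), lintegral_setLIntegral_ball hf,
      Measure.addHaar_ball_of_pos _ _ hr, finrank_euclideanSpace_fin, ← mul_assoc, ← mul_assoc,
      ← ENNReal.ofReal_mul (by positivity), mul_assoc (_ ^ γ), ← Real.rpow_natCast _ n,
      ← Real.rpow_add hr, neg_add_cancel, Real.rpow_zero, mul_one,
      Real.rpow_pow_comm (by norm_num), mul_assoc]
  unfold dyadicBallSum
  rw [lintegral_tsum fun k => ((measurable_setLIntegral_ball hf _).const_mul _).aemeasurable]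
  simp_rw [hterm]
  rw [ENNReal.tsum_mul_right, ← ENNReal.ofReal_tsum_of_nonneg (fun k => by positivity)
    (summable_geometric_of_lt_one hq0 hq1), tsum_geometric_of_lt_one hq0 hq1,
    ENNReal.ofReal_mul (by linarith [inv_pos.2 (sub_pos.2 hq1)]), measureReal_def,
    ENNReal.ofReal_toReal measure_ball_lt_top.ne, mul_assoc]

end DyadicBallSum

namespace IsHardyTest

variable {n : ℕ} {ϑ : Euc n → ℝ} {t Θ : ℝ}

lemma enorm_integral_scaledKernel_sub_mul_le (hϑ : IsHardyTest ϑ) (hΘ : ∀ z, |ϑ z| ≤ Θ)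
    (ht : 0 < t) (x : Euc n) (F : Euc n → ℝ) :
    ‖∫ y, scaledKernel ϑ t (x - y) * F y‖ₑ ≤
      ENNReal.ofReal (t ^ (-(n : ℝ)) * Θ) * ∫⁻ y in ball x t, ‖F y‖ₑ := by
  have hsupp : Function.support (fun y => ‖scaledKernel ϑ t (x - y) * F y‖ₑ) ⊆ ball x t :=
    fun y hy => hϑ.support_scaledKernel_sub_subset ht x fun hK => hy (by simp [hK])
  calc ‖∫ y, scaledKernel ϑ t (x - y) * F y‖ₑ
      ≤ ∫⁻ y, ‖scaledKernel ϑ t (x - y) * F y‖ₑ := enorm_integral_le_lintegral_enorm _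
    _ = ∫⁻ y in ball x t, ‖scaledKernel ϑ t (x - y) * F y‖ₑ :=
        (setLIntegral_eq_of_support_subset hsupp).symm
    _ ≤ ∫⁻ y in ball x t, ENNReal.ofReal (t ^ (-(n : ℝ)) * Θ) * ‖F y‖ₑ := by
        gcongr with y
        rw [enorm_mul, Real.enorm_eq_ofReal_abs]
        gcongr
        exact abs_scaledKernel_le hΘ ht _
    _ = _ := lintegral_const_mul' _ _ ENNReal.ofReal_ne_top

lemma integral_scaledKernel_sub_mul_mul (hϑ : IsHardyTest ϑ) (hΘ : ∀ z, |ϑ z| ≤ Θ)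
    (ht : 0 < t) (x : Euc n) {g h : Euc n → ℝ} {Mg : ℝ} (hg : Continuous g)
    (hMg : ∀ y, |g y| ≤ Mg) (hh : Integrable h) :
    ∫ y, scaledKernel ϑ t (x - y) * (g y * h y) =
      g x * (∫ y, scaledKernel ϑ t (x - y) * h y) +
        ∫ y, scaledKernel ϑ t (x - y) * ((g y - g x) * h y) := by
  have hosc : Integrable fun y => (g y - g x) * h y :=
    hh.bdd_mul (hg.sub continuous_const).aestronglyMeasurable (Eventually.of_forall fun y =>
      (norm_sub_le _ _).trans (add_le_add (hMg y) (hMg x)))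
  rw [← integral_const_mul (g x) fun y => scaledKernel ϑ t (x - y) * h y, ← integral_add
    ((hϑ.integrable_scaledKernel_sub_mul hΘ ht x hh).const_mul _)
    (hϑ.integrable_scaledKernel_sub_mul hΘ ht x hosc)]
  congr 1 with y
  ring

lemma ofReal_abs_integral_scaledKernel_sub_mul_sub_mul_le (hϑ : IsHardyTest ϑ) (hΘ0 : 0 ≤ Θ)
    (hΘ : ∀ z, |ϑ z| ≤ Θ) (ht : 0 < t) {γ Hg : ℝ} (hγ : 0 < γ) (hHg : 0 ≤ Hg)
    {g : Euc n → ℝ} (hHol : ∀ x y, |g x - g y| ≤ Hg * dist x y ^ γ) (h : Euc n → ℝ)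
    (x : Euc n) :
    ENNReal.ofReal |∫ y, scaledKernel ϑ t (x - y) * ((g y - g x) * h y)| ≤
      ENNReal.ofReal (Θ * Hg) *
        (ENNReal.ofReal (t ^ γ * t ^ (-(n : ℝ))) * ∫⁻ y in ball x t, ‖h y‖ₑ) := by
  rw [← Real.enorm_eq_ofReal_abs]
  calc _ ≤ ENNReal.ofReal (t ^ (-(n : ℝ)) * Θ) *
          ∫⁻ y in ball x t, ‖(g y - g x) * h y‖ₑ :=
        hϑ.enorm_integral_scaledKernel_sub_mul_le hΘ ht x _
    _ ≤ ENNReal.ofReal (t ^ (-(n : ℝ)) * Θ) *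
          ∫⁻ y in ball x t, ENNReal.ofReal (Hg * t ^ γ) * ‖h y‖ₑ := by
        refine mul_le_mul_right (setLIntegral_mono' measurableSet_ball fun y hy => ?_) _
        rw [enorm_mul, Real.enorm_eq_ofReal_abs]
        gcongr
        exact (hHol y x).trans (by gcongr; exact (mem_ball.1 hy).le)
    _ = _ := by
        rw [lintegral_const_mul' _ _ ENNReal.ofReal_ne_top, ← mul_assoc, ← mul_assoc,
          ← ENNReal.ofReal_mul (by positivity), ← ENNReal.ofReal_mul (by positivity)]
        ring_nf

lemma maxFunLoc_mul_le (hϑ : IsHardyTest ϑ) (hΘ0 : 0 ≤ Θ) (hΘ : ∀ z, |ϑ z| ≤ Θ) {γ : ℝ}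
    (hγ : 0 < γ) {g h : Euc n → ℝ} {Mg Hg : ℝ} (hMg : ∀ x, |g x| ≤ Mg) (hHg : 0 ≤ Hg)
    (hHol : ∀ x y, |g x - g y| ≤ Hg * dist x y ^ γ) (hh : Integrable h) (x : Euc n) :
    maxFunLoc ϑ (fun y => g y * h y) x ≤ ENNReal.ofReal Mg * maxFunLoc ϑ h x +
      ENNReal.ofReal (Θ * Hg) * (ENNReal.ofReal (2 ^ n) * dyadicBallSum γ (‖h ·‖ₑ) x) := by
  refine iSup₂_le fun t ht0 => iSup_le fun ht1 => ?_
  change ENNReal.ofReal |∫ y, scaledKernel ϑ t (x - y) * (g y * h y)| ≤ _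
  rw [hϑ.integral_scaledKernel_sub_mul_mul hΘ ht0 x
    (continuous_of_abs_sub_le_mul_dist_rpow hγ hHol) hMg hh]
  refine (ENNReal.ofReal_le_ofReal (abs_add_le _ _)).trans (ENNReal.ofReal_add_le.trans ?_)
  gcongr
  · rw [abs_mul, ENNReal.ofReal_mul (abs_nonneg _)]
    exact mul_le_mul' (ENNReal.ofReal_le_ofReal (hMg x))
      (ofReal_abs_integral_le_maxFunLoc ht0 ht1 h x)
  · refine (hϑ.ofReal_abs_integral_scaledKernel_sub_mul_sub_mul_le hΘ0 hΘ ht0 hγ hHg hHol h x).trans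
      (mul_le_mul_right ?_ _)
    exact rpow_mul_setLIntegral_ball_le_dyadicBallSum hγ.le ht0 ht1.le x

lemma hardyNormLoc_mul_le (hϑ : IsHardyTest ϑ) (hΘ0 : 0 ≤ Θ) (hΘ : ∀ z, |ϑ z| ≤ Θ) {γ : ℝ}
    (hγ : 0 < γ) {g h : Euc n → ℝ} {Mg Hg : ℝ} (hMg : ∀ x, |g x| ≤ Mg) (hHg : 0 ≤ Hg)
    (hHol : ∀ x y, |g x - g y| ≤ Hg * dist x y ^ γ) (hh : Integrable h) :
    hardyNormLoc ϑ (fun y => g y * h y) ≤ ENNReal.ofReal Mg * hardyNormLoc ϑ h +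
      ENNReal.ofReal (Θ * Hg) * (ENNReal.ofReal (2 ^ n) * ∫⁻ x, dyadicBallSum γ (‖h ·‖ₑ) x) := by
  refine (lintegral_mono fun x => hϑ.maxFunLoc_mul_le hΘ0 hΘ hγ hMg hHg hHol hh x).trans_eq ?_
  rw [lintegral_add_right' _ (((measurable_dyadicBallSum γ hh.aemeasurable.enorm).const_mul
      _).const_mul _).aemeasurable, lintegral_const_mul' _ _ ENNReal.ofReal_ne_top,
    lintegral_const_mul' _ _ ENNReal.ofReal_ne_top, lintegral_const_mul' _ _ ENNReal.ofReal_ne_top]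
  rfl

end IsHardyTest

theorem holder_multiplier_local_hardy_general (n : ℕ) (hn : 1 ≤ n) (γ : ℝ)
    (hγ0 : 0 < γ) (ϑ : Euc n → ℝ) (hϑ : IsHardyTest ϑ) :
    ∃ C : ℝ, 0 < C ∧
      ∀ (h g : Euc n → ℝ) (Mg Hg : ℝ),
        Integrable h volume →
        hardyNormLoc ϑ h ≠ ⊤ →
        (∀ x, |g x| ≤ Mg) →
        (∀ x y, |g x - g y| ≤ Hg * dist x y ^ γ) →
        hardyNormLoc ϑ (fun y => g y * h y) ≤
          ENNReal.ofReal (C * (Mg + Hg)) * hardyNormLoc ϑ h := by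
  obtain ⟨Θ, hΘ0, hΘ⟩ := hϑ.exists_abs_le
  set D := (1 - 2⁻¹ ^ γ)⁻¹ * volume.real (ball (0 : Euc n) 1)
  have hD : 0 ≤ D := mul_nonneg (inv_nonneg.2 (sub_nonneg.2
    (Real.rpow_le_one (by norm_num) (by norm_num) hγ0.le))) measureReal_nonneg
  refine ⟨1 + Θ * 2 ^ n * D, by positivity, fun h g Mg Hg hh _ hMg hHol => ?_⟩
  have hMg0 : 0 ≤ Mg := (abs_nonneg _).trans (hMg 0)
  have : Nonempty (Fin n) := ⟨⟨0, hn⟩⟩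
  have hHg0 : 0 ≤ Hg := nonneg_of_abs_sub_le_mul_dist_rpow hHol
  set N := hardyNormLoc ϑ h
  have hS : ∫⁻ x, dyadicBallSum γ (‖h ·‖ₑ) x ≤ ENNReal.ofReal D * N := by
    rw [lintegral_dyadicBallSum hγ0 hh.aemeasurable.enorm]
    exact mul_le_mul_right (hϑ.lintegral_enorm_le_hardyNormLoc hh.locallyIntegrable) _
  calc hardyNormLoc ϑ (fun y => g y * h y)
      ≤ ENNReal.ofReal Mg * N +
          ENNReal.ofReal (Θ * Hg) * (ENNReal.ofReal (2 ^ n) * (ENNReal.ofReal D * N)) :=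
        (hϑ.hardyNormLoc_mul_le hΘ0 hΘ hγ0 hMg hHg0 hHol hh).trans (by gcongr)
    _ = ENNReal.ofReal (Mg + Θ * 2 ^ n * D * Hg) * N := by
        rw [ENNReal.ofReal_add hMg0 (by positivity), add_mul, ← mul_assoc, ← mul_assoc,
          ← ENNReal.ofReal_mul (by positivity), ← ENNReal.ofReal_mul (by positivity)]
        ring_nf
    _ ≤ ENNReal.ofReal ((1 + Θ * 2 ^ n * D) * (Mg + Hg)) * N := by
        gcongr
        nlinarith [mul_nonneg (mul_nonneg (mul_nonneg hΘ0 (pow_nonneg zero_le_two n)) hD) hMg0]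

/-- **Multiplication of local Hardy functions by Hölder functions**: for `0 < γ ≤ 1` there
is `C = C(γ,n,ϑ)` with `‖gh‖_{h¹} ≤ C ‖g‖_{C^{0,γ}} ‖h‖_{h¹}` for every `h ∈ h¹(ℝⁿ)` and
every bounded `γ`-Hölder `g` (here `Mg` bounds `sup|g|` and `Hg` the Hölder seminorm, so
`Mg + Hg` bounds `‖g‖_{C^{0,γ}}`). -/
theorem holder_multiplier_local_hardy (n : ℕ) (hn : 1 ≤ n) (γ : ℝ)
    (hγ0 : 0 < γ) (hγ1 : γ ≤ 1) (ϑ : Euc n → ℝ) (hϑ : IsHardyTest ϑ) :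
    ∃ C : ℝ, 0 < C ∧
      ∀ (h g : Euc n → ℝ) (Mg Hg : ℝ),
        Integrable h volume →
        hardyNormLoc ϑ h ≠ ⊤ →
        (∀ x, |g x| ≤ Mg) →
        (∀ x y, |g x - g y| ≤ Hg * dist x y ^ γ) →
        hardyNormLoc ϑ (fun y => g y * h y) ≤
          ENNReal.ofReal (C * (Mg + Hg)) * hardyNormLoc ϑ h :=
  holder_multiplier_local_hardy_general n hn γ hγ0 ϑ hϑ

end
end

section
/- (Far-field Riesz potential estimate on Morrey functions.) Let n ≥ 1, 0 ≤ β < n, 1 ≤ p < ∞, 0 < αp < n−β, and let a be a Riesz-type kernel of order α with C¹-sphere bound K. Then there exists C = C(n,α,β,p,K) such that: for every g ∈ M^{p,β}(ℝⁿ) vanishing almost everywhere on B_{2r}(x₀) (some x₀ ∈ ℝⁿ, r > 0), and every z ∈ B_r(x₀), the integral ∫_{ℝⁿ} |a(z−y)| |g(y)| dy is finite and bounded by C ‖g‖_{M^{p,β}(ℝⁿ)} r^{α − (n−β)/p}. -/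
open MeasureTheory Metric Filter Set
open scoped ENNReal Topology NNReal

noncomputable section

/-- `a : ℝⁿ∖{0} → ℝ` is a Riesz-type kernel of order `α` with `C¹`-sphere bound `K`:
`a` is positively homogeneous of degree `α - n`, is `C¹` away from the origin, and its
restriction to the unit sphere is bounded in `C¹` by `K`. -/
def IsRieszKernel (n : ℕ) (α K : ℝ) (a : Euc n → ℝ) : Prop :=
  (∀ c : ℝ, 0 < c → ∀ x : Euc n, x ≠ 0 → a (c • x) = c ^ (α - (n : ℝ)) * a x) ∧
  ContDiffOn ℝ 1 a {(0 : Euc n)}ᶜ ∧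
  ∀ x : Euc n, ‖x‖ = 1 → |a x| + ‖fderiv ℝ a x‖ ≤ K

/-- The Riesz potential `A_α[g](x) = ∫ a(x-y) g(y) dy` (Bochner integral; `0` where the
integral does not converge). -/
def rieszPot {n : ℕ} (a g : Euc n → ℝ) (x : Euc n) : ℝ :=
  ∫ y, a (x - y) * g y

/-!
Split the complement of `B_{2r}(x₀)` into the dyadic annuli `B_{4ρ}(x₀) \ B_{2ρ}(x₀)`, `ρ = 2ᵏ r`.
On such an annulus `|z - y| ≥ ρ`, so homogeneity bounds the kernel by `K ρ^(α-n)`, while Hölder's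
inequality on `B_{4ρ}(x₀)` and the Morrey condition bound `∫ |g|` there by
`‖g‖_{M^{p,β}} |B₁|^(1-1/p) (4ρ)^(n-(n-β)/p)`. The annulus thus contributes `≲ ρ^(α-(n-β)/p)`,
and since `αp < n - β` the exponent is negative and the contributions form a convergent
geometric series.
-/

theorem setLIntegral_le_rpow_mul_measure_rpow {X : Type*} [MeasurableSpace X] {μ : Measure X}
    {f : X → ℝ≥0∞} {p : ℝ} (hp : 1 ≤ p) {s : Set X} (hf : AEMeasurable f (μ.restrict s)) :
    ∫⁻ x in s, f x ∂μ ≤ (∫⁻ x in s, f x ^ p ∂μ) ^ (1 / p) * μ s ^ (1 - 1 / p) := by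
  simpa [eLpNorm'_eq_lintegral_enorm] using
    eLpNorm'_le_eLpNorm'_mul_rpow_measure_univ one_pos hp hf.aestronglyMeasurable

theorem setLIntegral_ball_le_rpow_mul_morreySup {n : ℕ} (p β : ℝ) (ρ : Euc n → ℝ) (x : Euc n)
    {R : ℝ} (hR : 0 < R) :
    ∫⁻ y in ball x R, ENNReal.ofReal (ρ y ^ p) ≤ ENNReal.ofReal (R ^ β) * morreySup p β univ ρ := by
  have h : ENNReal.ofReal (R ^ (-β)) * ∫⁻ y in ball x R, ENNReal.ofReal (ρ y ^ p) ≤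
      morreySup p β univ ρ :=
    le_iSup₂_of_le x (mem_univ x) (le_iSup₂_of_le R hR (by rw [inter_univ]))
  calc _ = ENNReal.ofReal (R ^ β) *
        (ENNReal.ofReal (R ^ (-β)) * ∫⁻ y in ball x R, ENNReal.ofReal (ρ y ^ p)) := by
        rw [← mul_assoc, ← ENNReal.ofReal_mul (by positivity), ← Real.rpow_add hR,
          add_neg_cancel, Real.rpow_zero, ENNReal.ofReal_one, one_mul]
    _ ≤ _ := by gcongr

theorem setLIntegral_ball_abs_le_morreyNorm {n : ℕ} {p β : ℝ} (hp : 1 ≤ p) {g : Euc n → ℝ}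
    (hg : Measurable g) (x : Euc n) {R : ℝ} (hR : 0 < R) :
    ∫⁻ y in ball x R, ENNReal.ofReal |g y| ≤
      ENNReal.ofReal (R ^ ((n : ℝ) - ((n : ℝ) - β) / p)) *
        (morreyNorm p β univ (fun y => |g y|) * volume (ball (0 : Euc n) 1) ^ (1 - 1 / p)) := by
  have hp0 : 0 < p := by linarith
  have h1p : 0 ≤ 1 - 1 / p := by rw [sub_nonneg, div_le_one hp0]; exact hp
  have hmorrey : ∫⁻ y in ball x R, ENNReal.ofReal |g y| ^ p ≤
      ENNReal.ofReal (R ^ β) * morreySup p β univ (fun y => |g y|) := by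
    simp_rw [ENNReal.ofReal_rpow_of_nonneg (abs_nonneg _) hp0.le]
    exact setLIntegral_ball_le_rpow_mul_morreySup p β _ x hR
  have hexp : (R ^ β) ^ (1 / p) * (R ^ n) ^ (1 - 1 / p) = R ^ ((n : ℝ) - ((n : ℝ) - β) / p) := by
    rw [← Real.rpow_natCast, ← Real.rpow_mul hR.le, ← Real.rpow_mul hR.le, ← Real.rpow_add hR]
    congr 1
    field_simp
    ring
  calc _ ≤ (∫⁻ y in ball x R, ENNReal.ofReal |g y| ^ p) ^ (1 / p) *
        volume (ball x R) ^ (1 - 1 / p) :=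
        setLIntegral_le_rpow_mul_measure_rpow hp (by fun_prop)
    _ ≤ (ENNReal.ofReal (R ^ β) * morreySup p β univ (fun y => |g y|)) ^ (1 / p) *
        (ENNReal.ofReal (R ^ n) * volume (ball (0 : Euc n) 1)) ^ (1 - 1 / p) := by
        rw [Measure.addHaar_ball_of_pos volume x hR, finrank_euclideanSpace_fin]
        gcongr
    _ = _ := by
        rw [ENNReal.mul_rpow_of_nonneg _ _ (by positivity), ENNReal.mul_rpow_of_nonneg _ _ h1p,
          ENNReal.ofReal_rpow_of_pos (by positivity), ENNReal.ofReal_rpow_of_pos (by positivity),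
          ← hexp, ENNReal.ofReal_mul (by positivity), morreyNorm]
        ring

theorem morreyNorm_mul_volume_ball_rpow_eq_ofReal {n : ℕ} {p β : ℝ} (hp : 1 ≤ p)
    {ρ : Euc n → ℝ} (hM : morreySup p β univ ρ ≠ ⊤) :
    morreyNorm p β univ ρ * volume (ball (0 : Euc n) 1) ^ (1 - 1 / p) =
      ENNReal.ofReal ((morreyNorm p β univ ρ).toReal *
        (volume (ball (0 : Euc n) 1)).toReal ^ (1 - 1 / p)) := by
  have hp0 : 0 < p := by linarith
  have h1p : 0 ≤ 1 - 1 / p := by rw [sub_nonneg, div_le_one hp0]; exact hp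
  rw [ENNReal.ofReal_mul ENNReal.toReal_nonneg,
    ENNReal.ofReal_toReal (show morreyNorm p β univ ρ ≠ ⊤ from
      ENNReal.rpow_ne_top_of_nonneg (by positivity) hM),
    ← ENNReal.ofReal_rpow_of_nonneg ENNReal.toReal_nonneg h1p,
    ENNReal.ofReal_toReal measure_ball_lt_top.ne]

namespace IsRieszKernel

variable {n : ℕ} {α K : ℝ} {a : Euc n → ℝ}

theorem abs_le (ha : IsRieszKernel n α K a) {x : Euc n} (hx : x ≠ 0) :
    |a x| ≤ K * ‖x‖ ^ (α - n) := by
  have hx0 : 0 < ‖x‖ := norm_pos_iff.2 hx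
  set u : Euc n := ‖x‖⁻¹ • x
  have hu : ‖u‖ = 1 := by rw [norm_smul, norm_inv, norm_norm, inv_mul_cancel₀ hx0.ne']
  have hxu : x = ‖x‖ • u := by rw [smul_smul, mul_inv_cancel₀ hx0.ne', one_smul]
  have hau : |a u| ≤ K := (le_add_of_nonneg_right (norm_nonneg _)).trans (ha.2.2 u hu)
  calc |a x| = ‖x‖ ^ (α - n) * |a u| := by
        rw [hxu, ha.1 _ hx0 u (norm_ne_zero_iff.1 (by rw [hu]; exact one_ne_zero)), abs_mul,
          abs_of_pos (by positivity), norm_smul, hu, norm_norm, mul_one]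
    _ ≤ K * ‖x‖ ^ (α - n) := by rw [mul_comm]; gcongr

theorem bound_nonneg (ha : IsRieszKernel n α K a) {x : Euc n} (hx : x ≠ 0) : 0 ≤ K :=
  nonneg_of_mul_nonneg_left ((abs_nonneg _).trans (ha.abs_le hx))
    (Real.rpow_pos_of_pos (norm_pos_iff.2 hx) _)

theorem abs_le_of_le (ha : IsRieszKernel n α K a) (hαn : α ≤ n) {x : Euc n} {ρ : ℝ}
    (hρ : 0 < ρ) (hx : ρ ≤ ‖x‖) : |a x| ≤ K * ρ ^ (α - n) := by
  have hx0 : x ≠ 0 := norm_pos_iff.1 (hρ.trans_le hx)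
  calc |a x| ≤ K * ‖x‖ ^ (α - n) := ha.abs_le hx0
    _ ≤ K * ρ ^ (α - n) := by
        gcongr ?_ * ?_
        · exact ha.bound_nonneg hx0
        · exact Real.rpow_le_rpow_of_nonpos hρ hx (by linarith)

end IsRieszKernel

theorem compl_ball_subset_iUnion_annulus {X : Type*} [PseudoMetricSpace X] (x : X) {r : ℝ}
    (hr : 0 < r) :
    (ball x (2 * r))ᶜ ⊆ ⋃ k : ℕ, ball x (4 * (2 ^ k * r)) \ ball x (2 * (2 ^ k * r)) := by
  intro y hy
  rw [mem_compl_iff, mem_ball, not_lt] at hy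
  obtain ⟨k, hk1, hk2⟩ := exists_nat_pow_near ((one_le_div (by positivity)).2 hy) one_lt_two
  rw [le_div_iff₀ (by positivity)] at hk1
  rw [div_lt_iff₀ (by positivity), pow_succ] at hk2
  refine mem_iUnion.2 ⟨k, ?_, ?_⟩ <;> simp only [mem_ball, not_lt] <;> linarith

theorem tsum_ofReal_two_pow_mul_rpow {r γ : ℝ} (hr : 0 < r) (hγ : γ < 0) :
    ∑' k : ℕ, ENNReal.ofReal ((2 ^ k * r) ^ γ) = ENNReal.ofReal (r ^ γ / (1 - 2 ^ γ)) := by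
  have hq0 : 0 ≤ (2 : ℝ) ^ γ := by positivity
  have hq1 : (2 : ℝ) ^ γ < 1 := Real.rpow_lt_one_of_one_lt_of_neg one_lt_two hγ
  have hterm : ∀ k : ℕ, ((2 : ℝ) ^ k * r) ^ γ = r ^ γ * ((2 : ℝ) ^ γ) ^ k := fun k => by
    rw [Real.mul_rpow (by positivity) hr.le, mul_comm, ← Real.rpow_natCast, ← Real.rpow_natCast,
      ← Real.rpow_mul zero_le_two, ← Real.rpow_mul zero_le_two, mul_comm γ]
  simp_rw [hterm]
  rw [← ENNReal.ofReal_tsum_of_nonneg (fun k => by positivity)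
    ((summable_geometric_of_lt_one hq0 hq1).mul_left _), tsum_mul_left,
    tsum_geometric_of_lt_one hq0 hq1, div_eq_mul_inv]

section FarField

variable {n : ℕ} {α β p K : ℝ} {a g : Euc n → ℝ}

theorem setLIntegral_annulus_kernel_mul_le (ha : IsRieszKernel n α K a) (hαn : α ≤ n)
    (hp : 1 ≤ p) (hg : Measurable g) {x₀ z : Euc n} {ρ : ℝ} (hρ : 0 < ρ) (hz : z ∈ ball x₀ ρ) :
    ∫⁻ y in ball x₀ (4 * ρ) \ ball x₀ (2 * ρ),
        ENNReal.ofReal |a (z - y)| * ENNReal.ofReal |g y| ≤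
      ENNReal.ofReal (K * 4 ^ ((n : ℝ) - ((n : ℝ) - β) / p)) *
        ENNReal.ofReal (ρ ^ (α - ((n : ℝ) - β) / p)) *
        (morreyNorm p β univ (fun y => |g y|) * volume (ball (0 : Euc n) 1) ^ (1 - 1 / p)) := by
  have hker : ∀ y ∈ ball x₀ (4 * ρ) \ ball x₀ (2 * ρ),
      ENNReal.ofReal |a (z - y)| ≤ ENNReal.ofReal (K * ρ ^ (α - n)) := by
    rintro y ⟨-, hy⟩
    rw [mem_ball, not_lt] at hy
    refine ENNReal.ofReal_le_ofReal (ha.abs_le_of_le hαn hρ ?_)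
    rw [← dist_eq_norm, dist_comm]
    linarith [dist_triangle y z x₀, mem_ball.1 hz]
  have hexp : ρ ^ (α - n) * (4 * ρ) ^ ((n : ℝ) - ((n : ℝ) - β) / p) =
      4 ^ ((n : ℝ) - ((n : ℝ) - β) / p) * ρ ^ (α - ((n : ℝ) - β) / p) := by
    rw [Real.mul_rpow (by norm_num) hρ.le, mul_left_comm, ← Real.rpow_add hρ]
    ring_nf
  calc _ ≤ ∫⁻ y in ball x₀ (4 * ρ) \ ball x₀ (2 * ρ),
        ENNReal.ofReal (K * ρ ^ (α - n)) * ENNReal.ofReal |g y| :=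
        setLIntegral_mono (by fun_prop) fun y hy => mul_le_mul_left (hker y hy) _
    _ = ENNReal.ofReal (K * ρ ^ (α - n)) *
        ∫⁻ y in ball x₀ (4 * ρ) \ ball x₀ (2 * ρ), ENNReal.ofReal |g y| :=
        lintegral_const_mul _ (by fun_prop)
    _ ≤ ENNReal.ofReal (K * ρ ^ (α - n)) * ∫⁻ y in ball x₀ (4 * ρ), ENNReal.ofReal |g y| := by
        gcongr; exact sdiff_subset
    _ ≤ ENNReal.ofReal (K * ρ ^ (α - n)) *
        (ENNReal.ofReal ((4 * ρ) ^ ((n : ℝ) - ((n : ℝ) - β) / p)) *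
          (morreyNorm p β univ (fun y => |g y|) * volume (ball (0 : Euc n) 1) ^ (1 - 1 / p))) := by
        gcongr; exact setLIntegral_ball_abs_le_morreyNorm hp hg x₀ (by positivity)
    _ = _ := by
        rw [← mul_assoc, ← ENNReal.ofReal_mul' (by positivity),
          ← ENNReal.ofReal_mul' (by positivity), mul_assoc, hexp, mul_assoc]

theorem lintegral_kernel_mul_le_of_ae_eq_zero_on_ball (ha : IsRieszKernel n α K a)
    (hαn : α ≤ n) (hp : 1 ≤ p) (hγ : α - ((n : ℝ) - β) / p < 0) (hg : Measurable g)
    {x₀ z : Euc n} {r : ℝ} (hr : 0 < r) (hg0 : ∀ᵐ y, y ∈ ball x₀ (2 * r) → g y = 0)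
    (hz : z ∈ ball x₀ r) :
    ∫⁻ y, ENNReal.ofReal |a (z - y)| * ENNReal.ofReal |g y| ≤
      ENNReal.ofReal (K * 4 ^ ((n : ℝ) - ((n : ℝ) - β) / p) *
          (r ^ (α - ((n : ℝ) - β) / p) / (1 - 2 ^ (α - ((n : ℝ) - β) / p)))) *
        (morreyNorm p β univ (fun y => |g y|) * volume (ball (0 : Euc n) 1) ^ (1 - 1 / p)) := by
  set F : Euc n → ℝ≥0∞ := fun y => ENNReal.ofReal |a (z - y)| * ENNReal.ofReal |g y|
  have hnear : ∫⁻ y in ball x₀ (2 * r), F y = 0 := by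
    rw [setLIntegral_congr_fun_ae measurableSet_ball (g := 0)
      (hg0.mono fun y hy hy' => by simp [F, hy hy']), lintegral_zero_fun]
  calc ∫⁻ y, F y = ∫⁻ y in (ball x₀ (2 * r))ᶜ, F y := by
        rw [← lintegral_add_compl F measurableSet_ball, hnear, zero_add]
    _ ≤ ∑' k : ℕ, ∫⁻ y in ball x₀ (4 * (2 ^ k * r)) \ ball x₀ (2 * (2 ^ k * r)), F y :=
        (lintegral_mono_set (compl_ball_subset_iUnion_annulus x₀ hr)).trans
          (lintegral_iUnion_le _ _)
    _ ≤ ∑' k : ℕ, ENNReal.ofReal (K * 4 ^ ((n : ℝ) - ((n : ℝ) - β) / p)) *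
          ENNReal.ofReal ((2 ^ k * r) ^ (α - ((n : ℝ) - β) / p)) *
          (morreyNorm p β univ (fun y => |g y|) * volume (ball (0 : Euc n) 1) ^ (1 - 1 / p)) :=
        ENNReal.tsum_le_tsum fun k =>
          setLIntegral_annulus_kernel_mul_le ha hαn hp hg (by positivity)
            (ball_subset_ball (le_mul_of_one_le_left hr.le (one_le_pow₀ one_le_two)) hz)
    _ = _ := by
        have hsum : 0 ≤ r ^ (α - ((n : ℝ) - β) / p) / (1 - 2 ^ (α - ((n : ℝ) - β) / p)) :=
          div_nonneg (by positivity)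
            (sub_nonneg.2 (Real.rpow_le_one_of_one_le_of_nonpos one_le_two hγ.le))
        rw [ENNReal.tsum_mul_right, ENNReal.tsum_mul_left, tsum_ofReal_two_pow_mul_rpow hr hγ,
          ENNReal.ofReal_mul' hsum]

end FarField

theorem far_field_riesz_estimate_general (n : ℕ) (α β p K : ℝ)
    (hβ0 : 0 ≤ β) (hp : 1 ≤ p) (hαp : α * p < (n : ℝ) - β)
    (a : Euc n → ℝ) (ha : IsRieszKernel n α K a) :
    ∃ C : ℝ, 0 < C ∧
      ∀ (g : Euc n → ℝ) (x₀ : Euc n) (r : ℝ), 0 < r →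
        Measurable g →
        morreySup p β Set.univ (fun y => |g y|) ≠ ⊤ →
        (∀ᵐ y, y ∈ Metric.ball x₀ (2 * r) → g y = 0) →
        ∀ z ∈ Metric.ball x₀ r,
          (∫⁻ y, ENNReal.ofReal |a (z - y)| * ENNReal.ofReal |g y|) ≤
            ENNReal.ofReal
              (C * ((morreySup p β Set.univ (fun y => |g y|)) ^ (1 / p)).toReal *
                r ^ (α - ((n : ℝ) - β) / p)) := by
  have hp0 : 0 < p := by linarith
  have hαn : α ≤ n := by
    rcases le_or_gt α 0 with h | h
    · linarith [n.cast_nonneg (α := ℝ)]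
    · nlinarith
  have hγ : α - ((n : ℝ) - β) / p < 0 := by rw [sub_neg, lt_div_iff₀ hp0]; linarith
  set C₀ := K * 4 ^ ((n : ℝ) - ((n : ℝ) - β) / p) *
    (volume (ball (0 : Euc n) 1)).toReal ^ (1 - 1 / p) / (1 - 2 ^ (α - ((n : ℝ) - β) / p))
    with hC₀
  refine ⟨|C₀| + 1, by positivity, fun g x₀ r hr hg hM hg0 z hz => ?_⟩
  change _ ≤ ENNReal.ofReal ((|C₀| + 1) * (morreyNorm p β univ fun y => |g y|).toReal * _)
  calc _ ≤ _ := lintegral_kernel_mul_le_of_ae_eq_zero_on_ball ha hαn hp hγ hg hr hg0 hz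
    _ = ENNReal.ofReal
          (C₀ * (morreyNorm p β univ fun y => |g y|).toReal * r ^ (α - ((n : ℝ) - β) / p)) := by
        rw [morreyNorm_mul_volume_ball_rpow_eq_ofReal hp hM, ← ENNReal.ofReal_mul' (by positivity),
          hC₀]
        congr 1
        ring
    _ ≤ _ := ENNReal.ofReal_le_ofReal (by gcongr; linarith [le_abs_self C₀])

/-- **Far-field Riesz potential estimate on Morrey functions**: if `g ∈ M^{p,β}(ℝⁿ)`
vanishes a.e. on `B_{2r}(x₀)` then for every `z ∈ B_r(x₀)`,
`∫ |a(z-y)| |g(y)| dy ≤ C ‖g‖_{M^{p,β}} r^{α - (n-β)/p}`. -/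
theorem far_field_riesz_estimate (n : ℕ) (hn : 1 ≤ n) (α β p K : ℝ)
    (hβ0 : 0 ≤ β) (hβn : β < n) (hp : 1 ≤ p) (hα : 0 < α * p) (hαp : α * p < (n : ℝ) - β)
    (a : Euc n → ℝ) (ha : IsRieszKernel n α K a) :
    ∃ C : ℝ, 0 < C ∧
      ∀ (g : Euc n → ℝ) (x₀ : Euc n) (r : ℝ), 0 < r →
        Measurable g →
        morreySup p β Set.univ (fun y => |g y|) ≠ ⊤ →
        (∀ᵐ y, y ∈ Metric.ball x₀ (2 * r) → g y = 0) →
        ∀ z ∈ Metric.ball x₀ r,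
          (∫⁻ y, ENNReal.ofReal |a (z - y)| * ENNReal.ofReal |g y|) ≤
            ENNReal.ofReal
              (C * ((morreySup p β Set.univ (fun y => |g y|)) ^ (1 / p)).toReal *
                r ^ (α - ((n : ℝ) - β) / p)) :=
  far_field_riesz_estimate_general n α β p K hβ0 hp hαp a ha

end
end

section
/- (Weak Morrey spaces embed into smaller strong Morrey spaces.) Let n ≥ 1, E ⊆ ℝⁿ a measurable set, 1 < q < ∞, 0 ≤ β < n, and θ with 1/q ≤ θ < 1. Then there exists C = C(n,q,θ) such that every measurable g on E with ‖g‖_{M^{(q,∞),β}(E)} < ∞ satisfies ‖g‖_{M^{θq, n−θ(n−β)}(E)} ≤ C ‖g‖_{M^{(q,∞),β}(E)}; that is, sup_{x∈E, r>0} r^{−(n−θ(n−β))} ∫_{B_r(x)∩E} |g|^{θq} ≤ C^{θq} ‖g‖_{M^{(q,∞),β}(E)}^{θq}. -/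
open MeasureTheory Metric Filter Set
open scoped ENNReal Topology NNReal

noncomputable section

/-- The weak-Morrey quasinorm `‖g‖_{M^{(q,∞),β}(E)}
 = sup_{x ∈ E, r > 0} r^{-β/q} sup_{s>0} s |{y ∈ B_r(x) ∩ E : |g|(y) > s}|^{1/q}`,
for a function with pointwise magnitude `ρ`. -/
def wMorreySup {n : ℕ} (q β : ℝ) (E : Set (Euc n)) (ρ : Euc n → ℝ) : ℝ≥0∞ :=
  ⨆ (x : Euc n) (_ : x ∈ E) (r : ℝ) (_ : 0 < r),
    ENNReal.ofReal (r ^ (-β / q)) *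
      ⨆ (s : ℝ) (_ : 0 < s),
        ENNReal.ofReal s * (volume {y ∈ Metric.ball x r ∩ E | s < ρ y}) ^ (1 / q)

/-! By the layer-cake formula, `∫_{B_r(x) ∩ E} |g|^p = p ∫_0^∞ t^(p-1) μ(t) dt` for `p = θq`,
where the distribution function `μ(t) = |{y ∈ B_r(x) ∩ E : |g y| > t}|` is at most both
`|B_1| r^n` and `W^q r^β t^(-q)`, `W` being the weak-Morrey quasinorm. Using the first bound
below the level where the two cross and the second above it (integrable there since `p < q`)
gives `∫_{B_r(x) ∩ E} |g|^p ≤ |B_1|^(1-θ) / (1-θ) · W^p · r^(n - θ(n-β))`. -/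

lemma setLIntegral_Ioc_zero_rpow_sub_one {p s : ℝ} (hp : 0 < p) (hs : 0 ≤ s) :
    ∫⁻ t in Ioc 0 s, ENNReal.ofReal (t ^ (p - 1)) = ENNReal.ofReal (s ^ p / p) := by
  have hint : IntegrableOn (fun t : ℝ => t ^ (p - 1)) (Ioc 0 s) :=
    (intervalIntegral.intervalIntegrable_rpow' (by linarith)).1
  rw [← ofReal_integral_eq_lintegral_ofReal hint, ← intervalIntegral.integral_of_le hs,
    integral_rpow (Or.inl (by linarith))]
  · simp [Real.zero_rpow hp.ne']
  · filter_upwards [ae_restrict_mem measurableSet_Ioc] with t ht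
    exact Real.rpow_nonneg ht.1.le _

lemma setLIntegral_Ioi_rpow_of_lt {a s : ℝ} (ha : a < -1) (hs : 0 < s) :
    ∫⁻ t in Ioi s, ENNReal.ofReal (t ^ a) = ENNReal.ofReal (-s ^ (a + 1) / (a + 1)) := by
  rw [← ofReal_integral_eq_lintegral_ofReal (integrableOn_Ioi_rpow_of_lt ha hs),
    integral_Ioi_rpow_of_lt ha hs]
  filter_upwards [ae_restrict_mem measurableSet_Ioi] with t ht
  exact Real.rpow_nonneg (hs.trans ht).le _

lemma setLIntegral_Ioi_mul_rpow_sub_one_le {ν : ℝ → ℝ≥0∞} {p q A B : ℝ} (hp : 0 < p)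
    (hpq : p < q) (hA : 0 < A) (hB : 0 ≤ B) (hνA : ∀ t, ν t ≤ ENNReal.ofReal A)
    (hνB : ∀ t > 0, ν t ≤ ENNReal.ofReal (B * t ^ (-q))) :
    ∫⁻ t in Ioi 0, ν t * ENNReal.ofReal (t ^ (p - 1)) ≤
      ENNReal.ofReal (q / (p * (q - p)) * A ^ (1 - p / q) * B ^ (p / q)) := by
  have hq : 0 < q := hp.trans hpq
  rcases hB.eq_or_lt with rfl | hB
  · calc _ ≤ ∫⁻ _ in Ioi (0 : ℝ), 0 :=
          setLIntegral_mono measurable_const fun t ht => by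
            simp [le_zero_iff.mp ((hνB t ht).trans_eq (by simp))]
      _ = 0 := lintegral_zero
      _ ≤ _ := zero_le
  -- `s` is where the two bounds on `ν` cross.
  set s := (B / A) ^ (1 / q)
  have hs : 0 < s := by positivity
  have hlow : ∫⁻ t in Ioc 0 s, ν t * ENNReal.ofReal (t ^ (p - 1)) ≤
      ENNReal.ofReal (A * (s ^ p / p)) := calc
    _ ≤ ∫⁻ t in Ioc 0 s, ENNReal.ofReal A * ENNReal.ofReal (t ^ (p - 1)) :=
      setLIntegral_mono (by fun_prop) fun t _ => mul_le_mul_left (hνA t) _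
    _ = _ := by
      rw [lintegral_const_mul' _ _ ENNReal.ofReal_ne_top,
        setLIntegral_Ioc_zero_rpow_sub_one hp hs.le, ENNReal.ofReal_mul hA.le]
  have hhigh : ∫⁻ t in Ioi s, ν t * ENNReal.ofReal (t ^ (p - 1)) ≤
      ENNReal.ofReal (B * (s ^ (p - q) / (q - p))) := calc
    _ ≤ ∫⁻ t in Ioi s, ENNReal.ofReal B * ENNReal.ofReal (t ^ (p - 1 - q)) := by
      refine setLIntegral_mono (by fun_prop) fun t ht => ?_
      have ht0 : 0 < t := hs.trans ht
      calc ν t * ENNReal.ofReal (t ^ (p - 1))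
          ≤ ENNReal.ofReal (B * t ^ (-q)) * ENNReal.ofReal (t ^ (p - 1)) :=
            mul_le_mul_left (hνB t ht0) _
        _ = _ := by
          rw [← ENNReal.ofReal_mul (by positivity), ← ENNReal.ofReal_mul hB.le, mul_assoc,
            ← Real.rpow_add ht0, neg_add_eq_sub]
    _ = _ := by
      rw [lintegral_const_mul' _ _ ENNReal.ofReal_ne_top,
        setLIntegral_Ioi_rpow_of_lt (by linarith) hs, ENNReal.ofReal_mul hB.le,
        show p - 1 - q + 1 = p - q by ring, neg_div, ← div_neg, neg_sub]
  rw [← Ioc_union_Ioi_eq_Ioi hs.le, lintegral_union measurableSet_Ioi (Ioc_disjoint_Ioi le_rfl)]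
  refine (add_le_add hlow hhigh).trans_eq ?_
  rw [← ENNReal.ofReal_add (by positivity) (mul_nonneg hB.le (div_nonneg (by positivity)
    (by linarith)))]
  congr 1
  have hsp : s ^ p = B ^ (p / q) / A ^ (p / q) := by
    rw [← Real.rpow_mul (by positivity), Real.div_rpow hB.le hA.le, one_div_mul_eq_div]
  have hspq : s ^ (p - q) = B ^ (p / q) / B / (A ^ (p / q) / A) := by
    rw [← Real.rpow_mul (by positivity), one_div_mul_eq_div, sub_div, div_self hq.ne',
      Real.rpow_sub_one (by positivity), Real.div_rpow hB.le hA.le]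
    field_simp
  rw [hsp, hspq, Real.rpow_sub hA, Real.rpow_one]
  have : q - p ≠ 0 := by linarith
  field_simp
  ring

lemma setLIntegral_rpow_eq_lintegral_measure_sep_lt_mul {α : Type*} [MeasurableSpace α]
    {μ : Measure α} {S : Set α} {ρ : α → ℝ} (hρ : Measurable ρ) (hρ0 : ∀ y, 0 ≤ ρ y) {p : ℝ}
    (hp : 0 < p) :
    ∫⁻ y in S, ENNReal.ofReal (ρ y ^ p) ∂μ =
      ENNReal.ofReal p * ∫⁻ t in Ioi 0, μ {y ∈ S | t < ρ y} * ENNReal.ofReal (t ^ (p - 1)) := by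
  rw [lintegral_rpow_eq_lintegral_meas_lt_mul _ (ae_of_all _ hρ0) hρ.aemeasurable hp]
  congr 1
  refine lintegral_congr fun t => ?_
  rw [Measure.restrict_apply (measurableSet_lt measurable_const hρ), inter_comm]
  rfl

lemma le_ofReal_of_mul_mul_rpow_one_div_le {m : ℝ≥0∞} {c t w q : ℝ} (hq : 0 < q) (hc : 0 < c)
    (ht : 0 < t) (hw : 0 ≤ w)
    (h : ENNReal.ofReal c * (ENNReal.ofReal t * m ^ (1 / q)) ≤ ENNReal.ofReal w) :
    m ≤ ENNReal.ofReal ((w / c) ^ q * t ^ (-q)) := by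
  have hm : m ^ q⁻¹ ≤ ENNReal.ofReal (w / (c * t)) := by
    rw [ENNReal.ofReal_div_of_pos (by positivity), ENNReal.ofReal_mul hc.le,
      ENNReal.le_div_iff_mul_le (Or.inl (by positivity)) (Or.inl (by finiteness)), ← one_div]
    rwa [mul_comm, mul_assoc]
  rw [ENNReal.rpow_inv_le_iff hq, ENNReal.ofReal_rpow_of_nonneg (by positivity) hq.le] at hm
  refine hm.trans_eq (congr_arg _ ?_)
  rw [← div_div, Real.div_rpow (by positivity) ht.le, Real.rpow_neg ht.le, div_eq_mul_inv]

lemma le_wMorreySup {n : ℕ} {q β : ℝ} {E : Set (Euc n)} {ρ : Euc n → ℝ} {x : Euc n} (hx : x ∈ E)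
    {r t : ℝ} (hr : 0 < r) (ht : 0 < t) :
    ENNReal.ofReal (r ^ (-β / q)) *
        (ENNReal.ofReal t * volume {y ∈ ball x r ∩ E | t < ρ y} ^ (1 / q)) ≤
      wMorreySup q β E ρ :=
  le_iSup₂_of_le x hx <| le_iSup₂_of_le r hr <| by
    gcongr
    exact le_iSup₂_of_le t ht le_rfl

lemma volume_sep_ball_inter_le_of_wMorreySup {n : ℕ} {q β : ℝ} (hq : 0 < q) {E : Set (Euc n)}
    {ρ : Euc n → ℝ} (hW : wMorreySup q β E ρ ≠ ⊤) {x : Euc n} (hx : x ∈ E) {r t : ℝ}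
    (hr : 0 < r) (ht : 0 < t) :
    volume {y ∈ ball x r ∩ E | t < ρ y} ≤
      ENNReal.ofReal ((wMorreySup q β E ρ).toReal ^ q * r ^ β * t ^ (-q)) := by
  have hweak := le_wMorreySup (q := q) (β := β) (ρ := ρ) hx hr ht
  rw [← ENNReal.ofReal_toReal hW] at hweak
  refine (le_ofReal_of_mul_mul_rpow_one_div_le hq (by positivity) ht ENNReal.toReal_nonneg
    hweak).trans_eq ?_
  rw [Real.div_rpow ENNReal.toReal_nonneg (by positivity), ← Real.rpow_mul hr.le,
    div_mul_cancel₀ _ hq.ne', Real.rpow_neg hr.le, div_inv_eq_mul]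

lemma toReal_volume_ball_pos {n : ℕ} (x : Euc n) {r : ℝ} (hr : 0 < r) :
    0 < (volume (ball x r)).toReal :=
  ENNReal.toReal_pos (measure_ball_pos volume x hr).ne' measure_ball_lt_top.ne

lemma volume_sep_ball_inter_le {n : ℕ} {E : Set (Euc n)} {ρ : Euc n → ℝ} (x : Euc n) {r : ℝ}
    (hr : 0 < r) (t : ℝ) :
    volume {y ∈ ball x r ∩ E | t < ρ y} ≤
      ENNReal.ofReal ((volume (ball (0 : Euc n) 1)).toReal * r ^ n) := by
  refine (measure_mono fun y hy => hy.1.1).trans_eq ?_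
  rw [Measure.addHaar_ball_of_pos volume x hr, finrank_euclideanSpace_fin, mul_comm,
    ENNReal.ofReal_mul ENNReal.toReal_nonneg, ENNReal.ofReal_toReal measure_ball_lt_top.ne]

lemma ofReal_rpow_neg_mul_setLIntegral_ball_le {n : ℕ} {q β θ : ℝ} (hq : 0 < q) (hθ0 : 0 < θ)
    (hθ1 : θ < 1) {E : Set (Euc n)} {ρ : Euc n → ℝ} (hρ : Measurable ρ) (hρ0 : ∀ y, 0 ≤ ρ y)
    (hW : wMorreySup q β E ρ ≠ ⊤) {x : Euc n} (hx : x ∈ E) {r : ℝ} (hr : 0 < r) :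
    ENNReal.ofReal (r ^ (-((n : ℝ) - θ * ((n : ℝ) - β)))) *
        ∫⁻ y in ball x r ∩ E, ENNReal.ofReal (ρ y ^ (θ * q)) ≤
      ENNReal.ofReal ((volume (ball (0 : Euc n) 1)).toReal ^ (1 - θ) / (1 - θ)) *
        wMorreySup q β E ρ ^ (θ * q) := by
  set V := (volume (ball (0 : Euc n) 1)).toReal
  set w := (wMorreySup q β E ρ).toReal
  set p := θ * q
  have hV : 0 < V := toReal_volume_ball_pos 0 one_pos
  have hp : 0 < p := by positivity
  have hpq : p < q := by simpa [p] using mul_lt_mul_of_pos_right hθ1 hq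
  have hpq' : p / q = θ := mul_div_cancel_right₀ θ hq.ne'
  have hwp : (w ^ q) ^ θ = w ^ p := by rw [← Real.rpow_mul ENNReal.toReal_nonneg, mul_comm]
  have hrpow : r ^ (-((n : ℝ) - θ * ((n : ℝ) - β))) * ((r ^ n) ^ (1 - θ) * (r ^ β) ^ θ) = 1 := by
    rw [← Real.rpow_natCast, ← Real.rpow_mul hr.le, ← Real.rpow_mul hr.le, ← Real.rpow_add hr,
      ← Real.rpow_add hr]
    ring_nf
    exact Real.rpow_zero r
  calc _ = ENNReal.ofReal (r ^ (-((n : ℝ) - θ * ((n : ℝ) - β)))) * (ENNReal.ofReal p *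
        ∫⁻ t in Ioi 0, volume {y ∈ ball x r ∩ E | t < ρ y} * ENNReal.ofReal (t ^ (p - 1))) := by
        rw [setLIntegral_rpow_eq_lintegral_measure_sep_lt_mul hρ hρ0 hp]
    _ ≤ ENNReal.ofReal (r ^ (-((n : ℝ) - θ * ((n : ℝ) - β)))) * (ENNReal.ofReal p *
        ENNReal.ofReal (q / (p * (q - p)) * (V * r ^ n) ^ (1 - p / q) *
          (w ^ q * r ^ β) ^ (p / q))) := by
        gcongr
        exact setLIntegral_Ioi_mul_rpow_sub_one_le hp hpq (by positivity) (by positivity)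
          (volume_sep_ball_inter_le x hr) fun t ht =>
            (volume_sep_ball_inter_le_of_wMorreySup hq hW hx hr ht).trans_eq (by rw [mul_assoc])
    _ = ENNReal.ofReal (V ^ (1 - θ) / (1 - θ)) * ENNReal.ofReal (w ^ p) := by
        rw [← ENNReal.ofReal_mul (by positivity), ← ENNReal.ofReal_mul (by positivity),
          ← ENNReal.ofReal_mul (by positivity)]
        congr 1
        rw [hpq', Real.mul_rpow hV.le (by positivity), Real.mul_rpow (by positivity)
          (by positivity), hwp]
        calc _ = r ^ (-((n : ℝ) - θ * ((n : ℝ) - β))) * ((r ^ n) ^ (1 - θ) * (r ^ β) ^ θ) *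
              (p * (q / (p * (q - p))) * V ^ (1 - θ) * w ^ p) := by ring
          _ = _ := by
            rw [hrpow]
            have : 1 - θ ≠ 0 := by linarith
            have : q - p ≠ 0 := by linarith
            field_simp
            ring
    _ = _ := by
        rw [← ENNReal.ofReal_rpow_of_nonneg ENNReal.toReal_nonneg hp.le, ENNReal.ofReal_toReal hW]

lemma morreySup_le_of_wMorreySup_ne_top {n : ℕ} {q β θ : ℝ} (hq : 0 < q) (hθ0 : 0 < θ)
    (hθ1 : θ < 1) {E : Set (Euc n)} {ρ : Euc n → ℝ} (hρ : Measurable ρ) (hρ0 : ∀ y, 0 ≤ ρ y)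
    (hW : wMorreySup q β E ρ ≠ ⊤) :
    morreySup (θ * q) ((n : ℝ) - θ * ((n : ℝ) - β)) E ρ ≤
      ENNReal.ofReal ((volume (ball (0 : Euc n) 1)).toReal ^ (1 - θ) / (1 - θ)) *
        wMorreySup q β E ρ ^ (θ * q) :=
  iSup₂_le fun _ hx => iSup₂_le fun _ hr =>
    ofReal_rpow_neg_mul_setLIntegral_ball_le hq hθ0 hθ1 hρ hρ0 hW hx hr

theorem weak_morrey_into_strong_morrey_general (n : ℕ) (q β θ : ℝ)
    (hq : 1 < q) (hθ1 : 1 / q ≤ θ) (hθ2 : θ < 1)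
    (E : Set (Euc n)) :
    ∃ C : ℝ, 0 < C ∧
      ∀ g : Euc n → ℝ, Measurable g →
        wMorreySup q β E (fun y => |g y|) ≠ ⊤ →
        morreyNorm (θ * q) ((n : ℝ) - θ * ((n : ℝ) - β)) E (fun y => |g y|) ≤
          ENNReal.ofReal C * wMorreySup q β E (fun y => |g y|) := by
  have hq0 : 0 < q := one_pos.trans hq
  have hθ0 : 0 < θ := (one_div_pos.mpr hq0).trans_le hθ1
  have hp : 0 < θ * q := by positivity
  set K := (volume (ball (0 : Euc n) 1)).toReal ^ (1 - θ) / (1 - θ)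
  have hK : 0 < K := div_pos (Real.rpow_pos_of_pos (toReal_volume_ball_pos 0 one_pos) _)
    (by linarith)
  refine ⟨K ^ (1 / (θ * q)), by positivity, fun g hg hW => ?_⟩
  calc _ ≤ (ENNReal.ofReal K * wMorreySup q β E (fun y => |g y|) ^ (θ * q)) ^ (1 / (θ * q)) :=
        ENNReal.rpow_le_rpow (morreySup_le_of_wMorreySup_ne_top hq0 hθ0 hθ2 hg.abs
          (fun y => abs_nonneg (g y)) hW) (by positivity)
    _ = _ := by
        rw [ENNReal.mul_rpow_of_nonneg _ _ (by positivity), ← ENNReal.rpow_mul,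
          mul_one_div_cancel hp.ne', ENNReal.rpow_one, ENNReal.ofReal_rpow_of_pos hK]

/-- **Weak Morrey spaces embed into smaller strong Morrey spaces**: for `1 < q < ∞`,
`0 ≤ β < n` and `1/q ≤ θ < 1`, every `g ∈ M^{(q,∞),β}(E)` satisfies
`‖g‖_{M^{θq, n-θ(n-β)}(E)} ≤ C ‖g‖_{M^{(q,∞),β}(E)}`. -/
theorem weak_morrey_into_strong_morrey (n : ℕ) (hn : 1 ≤ n) (q β θ : ℝ)
    (hq : 1 < q) (hβ0 : 0 ≤ β) (hβn : β < n) (hθ1 : 1 / q ≤ θ) (hθ2 : θ < 1)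
    (E : Set (Euc n)) (hE : MeasurableSet E) :
    ∃ C : ℝ, 0 < C ∧
      ∀ g : Euc n → ℝ, Measurable g →
        wMorreySup q β E (fun y => |g y|) ≠ ⊤ →
        morreyNorm (θ * q) ((n : ℝ) - θ * ((n : ℝ) - β)) E (fun y => |g y|) ≤
          ENNReal.ofReal C * wMorreySup q β E (fun y => |g y|) :=
  weak_morrey_into_strong_morrey_general n q β θ hq hθ1 hθ2 E

end
end
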